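/- arXiv:1101.6002 — 3 statements merged into one kernel-verified Lean document; each statement's English description precedes it below -/
import Mathlib

section
/- Two planar graphs are 2-isomorphic (there is a bijection of edge sets carrying cycles to cycles) if and only if they have the same set of abstract duals. -/
open scoped Classical

/-- A finite multigraph: edges with a source and target vertex. -/
structure Multigraph (V E : Type) where
  src : E → V
  tgt : E → V

/-- A dart is an oriented edge: an edge together with a direction. -/
abbrev Dart (E : Type) := E × Bool

namespace Multigraph

variable {V E : Type}

/-- Source of a dart. -/
def dsrc (G : Multigraph V E) (d : Dart E) : V := if d.2 then G.src d.1 else G.tgt d.1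

/-- Target of a dart. -/
def dtgt (G : Multigraph V E) (d : Dart E) : V := if d.2 then G.tgt d.1 else G.src d.1

/-- A closed walk: a nonempty cyclically consistent list of darts. -/
def IsClosedWalk (G : Multigraph V E) (w : List (Dart E)) : Prop :=
  w ≠ [] ∧ List.Chain' (fun d d' => G.dtgt d = G.dsrc d') w ∧
    ∀ dl ∈ w.getLast?, ∀ dh ∈ w.head?, G.dtgt dl = G.dsrc dh

/-- A cycle: a closed walk repeating no edges and no vertices. -/
def IsCycle (G : Multigraph V E) (w : List (Dart E)) : Prop :=
  G.IsClosedWalk w ∧ (w.map Prod.fst).Nodup ∧ (w.map G.dsrc).Nodup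

/-- A walk from `u` to `v`. -/
def IsWalkFrom (G : Multigraph V E) (w : List (Dart E)) (u v : V) : Prop :=
  List.Chain' (fun d d' => G.dtgt d = G.dsrc d') w ∧
    (w = [] → u = v) ∧ (∀ d ∈ w.head?, G.dsrc d = u) ∧ (∀ d ∈ w.getLast?, G.dtgt d = v)

/-- Connectivity: any two vertices are joined by a walk. -/
def Conn (G : Multigraph V E) : Prop := ∀ u v : V, ∃ w, G.IsWalkFrom w u v

/-- The 1-chain (with `ℤ` coefficients) of a single dart. -/
noncomputable def dartChain (d : Dart E) : E → ℤ :=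
  fun e => if d.1 = e then (if d.2 then 1 else -1) else 0

/-- The 1-chain of a walk. -/
noncomputable def chain (w : List (Dart E)) : E → ℤ := (w.map dartChain).sum

/-- The length of a walk given edge lengths `l`. -/
def walkLength (l : E → ℝ) (w : List (Dart E)) : ℝ := (w.map fun d => l d.1).sum

/-- The set of (unoriented) edges used by a walk. -/
def edges (w : List (Dart E)) : Set E := {e | ∃ b, (e, b) ∈ w}

/-- The set of vertices visited by a closed walk. -/
def vertsOf (G : Multigraph V E) (w : List (Dart E)) : Set V := {v | ∃ d ∈ w, G.dsrc d = v}

/-- Restriction of a graph to a set of edges. -/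
def restrict (G : Multigraph V E) (S : Set E) : Multigraph V S where
  src e := G.src e.1
  tgt e := G.tgt e.1

/-- Deletion of a set of vertices (and all incident edges). -/
def deleteVerts (G : Multigraph V E) (X : Set V) :
    Multigraph {v // v ∉ X} {e // G.src e ∉ X ∧ G.tgt e ∉ X} where
  src e := ⟨G.src e.1, e.2.1⟩
  tgt e := ⟨G.tgt e.1, e.2.2⟩

/-- Degree of a vertex (loops count twice). -/
noncomputable def degree (G : Multigraph V E) [Fintype E] (v : V) : ℕ :=
  (Finset.univ.filter fun e => G.src e = v).card +
  (Finset.univ.filter fun e => G.tgt e = v).card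

/-- The boundary of a 1-chain. -/
noncomputable def boundary (G : Multigraph V E) [Fintype E] (x : E → ℤ) : V → ℤ :=
  fun v => ∑ e, x e * ((if G.tgt e = v then 1 else 0) - (if G.src e = v then 1 else 0))

/-- The first homology `H₁(G,ℤ)`, as the kernel of the boundary map. -/
def H1 (G : Multigraph V E) [Fintype E] : Submodule ℤ (E → ℤ) where
  carrier := {x | G.boundary x = 0}
  add_mem' := by
    intro a b ha hb
    have h : G.boundary (a + b) = G.boundary a + G.boundary b := by
      funext v
      simp [boundary, add_mul, Finset.sum_add_distrib]
    simp only [Set.mem_setOf_eq] at *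
    rw [h, ha, hb, add_zero]
  zero_mem' := by
    simp only [Set.mem_setOf_eq]
    funext v
    simp [boundary]
  smul_mem' := by
    intro c x hx
    have h : G.boundary (c • x) = c • G.boundary x := by
      funext v
      simp [boundary, Finset.mul_sum, mul_assoc]
    simp only [Set.mem_setOf_eq] at *
    rw [h, hx, smul_zero]

/-- The path metric induced by edge lengths. -/
noncomputable def gdist (G : Multigraph V E) (l : E → ℝ) (u v : V) : ℝ :=
  sInf {x | ∃ w, G.IsWalkFrom w u v ∧ walkLength l w = x}

/-- Minimal length of a closed walk in a given homology class. -/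
noncomputable def minLen (G : Multigraph V E) (l : E → ℝ) (h : E → ℤ) : ℝ :=
  sInf {x | ∃ w, G.IsClosedWalk w ∧ chain w = h ∧ walkLength l w = x}

end Multigraph

open Multigraph

/-- The `𝔽₂` edge-indicator chain of a walk. -/
noncomputable def chain2 {E : Type} (w : List (Dart E)) : E → ZMod 2 :=
  fun e => if e ∈ Multigraph.edges w then 1 else 0

/-- The cycle space of `G` over `𝔽₂`: the span of the indicator vectors of cycles. -/
noncomputable def cycleSpace {V E : Type} (G : Multigraph V E) : Submodule (ZMod 2) (E → ZMod 2) :=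
  Submodule.span (ZMod 2) {x | ∃ w, G.IsCycle w ∧ chain2 w = x}

/-- Two oriented cycles have an edge of positive overlap if they traverse some common edge
in the same direction. -/
def PositiveOverlap {E : Type} (w w' : List (Dart E)) : Prop :=
  ∃ d : Dart E, d ∈ w ∧ d ∈ w'

/-- MacLane's criterion, taken as the definition of planarity: the cycle space over `𝔽₂`
has a simple basis consisting of cycles (each edge lies in at most two basis cycles). -/
def IsPlanarMacLane {V E : Type} [Fintype E] (G : Multigraph V E) : Prop :=
  ∃ (n : ℕ) (b : Module.Basis (Fin n) (ZMod 2) (cycleSpace G)) (c : Fin n → List (Dart E)),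
    (∀ i, G.IsCycle (c i) ∧ ((b i : cycleSpace G) : E → ZMod 2) = chain2 (c i)) ∧
    ∀ e : E, (Finset.univ.filter fun i => e ∈ Multigraph.edges (c i)).card ≤ 2

/-- A set of edges is an edge cut if deleting it disconnects the graph. -/
def IsEdgeCut {V E : Type} (G : Multigraph V E) (S : Set E) : Prop :=
  ¬ (G.restrict Sᶜ).Conn

/-- A minimal cut: an edge cut no proper subset of which is a cut. -/
def IsMinimalCut {V E : Type} (G : Multigraph V E) (S : Set E) : Prop :=
  IsEdgeCut G S ∧ ∀ S' ⊂ S, ¬ IsEdgeCut G S'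

/-- A set of edges forming a cycle. -/
def IsCycleSet {V E : Type} (G : Multigraph V E) (S : Set E) : Prop :=
  ∃ w, G.IsCycle w ∧ Multigraph.edges w = S

/-- `G'` is an abstract dual of `G`: some edge bijection carries cycles of `G` exactly to
minimal cuts of `G'`. -/
def IsAbstractDual {V E V' E' : Type} (G : Multigraph V E) (G' : Multigraph V' E') : Prop :=
  ∃ ψ : E ≃ E', ∀ S : Set E, IsCycleSet G S ↔ IsMinimalCut G' (ψ '' S)

/-- `G` and `H` are 2-isomorphic: some edge bijection carries cycles to cycles. -/
def TwoIsomorphic {V E V' E' : Type} (G : Multigraph V E) (H : Multigraph V' E') : Prop :=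
  ∃ φ : E ≃ E', ∀ S : Set E, IsCycleSet G S ↔ IsCycleSet H (φ '' S)

/-!
Composing edge bijections shows that 2-isomorphic graphs have the same abstract duals. Conversely,
a planar `G` has an abstract dual `D`; if `D` is also a dual of `H`, composing the two bijections
onto the edges of `D` is a 2-isomorphism.

The dual comes from a simple basis of the cycle space over `𝔽₂`: its vertices are the basis cycles
(the faces) and an outer face, and each edge joins the at most two faces containing it. The sum of a
nonempty set `T` of faces is supported exactly on the edges of `D` leaving `T`, so these supports
are cuts of `D`, and every cut contains one. Every nonzero vector of the cycle space is an even
subgraph, whose support contains a cycle, and cycles form an antichain under inclusion; hence the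
cycles of `G` are precisely the minimal cuts of `D`.
-/

lemma List.sum_map_ite_eq_count {α β : Type} [DecidableEq β] (l : List α) (f : α → β) (b : β) :
    (l.map fun a => if f a = b then 1 else 0).sum = (l.map f).count b := by
  induction l with
  | nil => simp
  | cons a l ih => simp [List.count_cons, ih, add_comm]

lemma ZMod.eq_one_of_ne_zero {a : ZMod 2} (h : a ≠ 0) : a = 1 :=
  Fin.eq_one_of_ne_zero a h

lemma ZMod.mem_span_range_iff_exists_finset_sum {ι M : Type*} [Fintype ι] [AddCommGroup M]
    [Module (ZMod 2) M] {v : ι → M} {x : M} :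
    x ∈ Submodule.span (ZMod 2) (Set.range v) ↔ ∃ T : Finset ι, ∑ i ∈ T, v i = x := by
  rw [Submodule.mem_span_range_iff_exists_fun]
  constructor
  · rintro ⟨c, rfl⟩
    refine ⟨Finset.univ.filter (c · ≠ 0), ?_⟩
    rw [Finset.sum_filter]
    refine Finset.sum_congr rfl fun i _ => ?_
    by_cases h : c i = 0
    · simp [h]
    · simp [ZMod.eq_one_of_ne_zero h]
  · rintro ⟨T, rfl⟩
    refine ⟨fun i => if i ∈ T then 1 else 0, ?_⟩
    simp [ite_smul, Finset.sum_ite_mem]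

lemma LinearIndependent.sum_ne_zero {ι R M : Type*} [Ring R] [Nontrivial R] [AddCommGroup M]
    [Module R M] {v : ι → M} (hv : LinearIndependent R v) {T : Finset ι} (hT : T.Nonempty) :
    ∑ i ∈ T, v i ≠ 0 := fun h => by
  obtain ⟨i, hi⟩ := hT
  exact one_ne_zero (linearIndependent_iff'.1 hv T (fun _ => 1) (by simpa using h) i hi)

lemma IsAntichain.iff_minimal_of_forall_exists_subset {α : Type*} {P Q : Set α → Prop}
    (hP : IsAntichain (· ⊆ ·) {s | P s}) (hPQ : ∀ s, P s → Q s)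
    (hQP : ∀ s, Q s → ∃ t ⊆ s, P t) (s : Set α) : P s ↔ Minimal Q s := by
  rw [Set.minimal_iff_forall_ssubset]
  constructor
  · refine fun hs => ⟨hPQ s hs, fun t hts hQt => ?_⟩
    obtain ⟨r, hrt, hr⟩ := hQP t hQt
    exact hts.2 (hP.eq hr hs (hrt.trans hts.1) ▸ hrt)
  · rintro ⟨hs, hmin⟩
    obtain ⟨t, hts, ht⟩ := hQP s hs
    obtain rfl | hlt := hts.eq_or_ssubset
    exacts [ht, absurd (hPQ t ht) (hmin hlt)]

lemma getElem?_mem_image_some_iff_sum_eq_zero {ι : Type*} (T : Set ι) :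
    ∀ l : List ι, l.length ≤ 2 →
      ((l[0]? ∈ some '' T ↔ l[1]? ∈ some '' T) ↔
        (l.map fun i => if i ∈ T then (1 : ZMod 2) else 0).sum = 0)
  | [], _ => by simp
  | [a], _ => by by_cases ha : a ∈ T <;> simp [ha]
  | [a, b], _ => by by_cases ha : a ∈ T <;> by_cases hb : b ∈ T <;> simp [ha, hb]; decide
  | _ :: _ :: _ :: _, h => by simp at h

namespace Multigraph

variable {V E : Type} (G : Multigraph V E)

section Walks

variable {G}

lemma isWalkFrom_nil (u : V) : G.IsWalkFrom [] u u :=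
  ⟨List.isChain_nil, fun _ => rfl, by simp, by simp⟩

lemma IsWalkFrom.of_cons {d : Dart E} {w : List (Dart E)} {u v : V}
    (h : G.IsWalkFrom (d :: w) u v) : G.dsrc d = u ∧ G.IsWalkFrom w (G.dtgt d) v := by
  obtain ⟨hc, -, hh, hl⟩ := h
  refine ⟨hh d rfl, hc.tail, ?_, ?_, fun d' hd' => hl d' ?_⟩
  · rintro rfl
    exact hl d rfl
  · cases w with
    | nil => simp
    | cons a t => simpa using (List.isChain_cons_cons.1 hc).1.symm
  · cases w with
    | nil => simp at hd'
    | cons a t => rwa [List.getLast?_cons_cons]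

lemma IsWalkFrom.append_dart {w : List (Dart E)} {u : V} {d : Dart E}
    (h : G.IsWalkFrom w u (G.dsrc d)) : G.IsWalkFrom (w ++ [d]) u (G.dtgt d) := by
  obtain ⟨hc, hn, hh, hl⟩ := h
  refine ⟨hc.append (List.isChain_singleton d) ?_, by simp, ?_, by simp⟩
  · intro x hx y hy
    simp only [List.head?_cons, Option.mem_some_iff] at hy
    rw [hl x hx, hy]
  · cases w with
    | nil => simpa using (hn rfl).symm
    | cons x t => simpa using hh x rfl

lemma IsWalkFrom.of_append {s w : List (Dart E)} {u v : V} (h : G.IsWalkFrom (s ++ w) u v) :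
    ∃ a, G.IsWalkFrom w a v := by
  induction s generalizing u with
  | nil => exact ⟨u, h⟩
  | cons d s ih => exact ih h.of_cons.2

lemma IsWalkFrom.isClosedWalk {w : List (Dart E)} {u : V} (hw : w ≠ [])
    (h : G.IsWalkFrom w u u) : G.IsClosedWalk w :=
  ⟨hw, h.1, fun dl hl dh hh => (h.2.2.2 dl hl).trans (h.2.2.1 dh hh).symm⟩

lemma IsClosedWalk.isWalkFrom {w : List (Dart E)} (hw : G.IsClosedWalk w) {d : Dart E}
    (hd : d ∈ w.head?) : G.IsWalkFrom w (G.dsrc d) (G.dsrc d) :=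
  ⟨hw.2.1, fun h => absurd h hw.1, fun d' hd' => by rw [Option.mem_unique hd' hd],
    fun dl hl => hw.2.2 dl hl d hd⟩

lemma IsWalkFrom.cons_map_dtgt {w : List (Dart E)} {u v : V} (h : G.IsWalkFrom w u v) :
    u :: w.map G.dtgt = w.map G.dsrc ++ [v] := by
  induction w generalizing u with
  | nil => simp [h.2.1 rfl]
  | cons d w ih =>
    obtain ⟨rfl, htail⟩ := h.of_cons
    simp [ih htail]

lemma IsWalkFrom.mem_iff {w : List (Dart E)} {u v : V} (h : G.IsWalkFrom w u v) {X : Set V}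
    (hX : ∀ d ∈ w, G.dsrc d ∈ X ↔ G.dtgt d ∈ X) : ∀ x ∈ w.map G.dsrc ++ [v], x ∈ X ↔ u ∈ X := by
  induction w generalizing u with
  | nil => simp [h.2.1 rfl]
  | cons d w ih =>
    obtain ⟨rfl, htail⟩ := h.of_cons
    have ih := ih htail fun d' hd' => hX d' (List.mem_cons_of_mem d hd')
    simp only [List.map_cons, List.cons_append, List.mem_cons, forall_eq_or_imp, iff_self,
      true_and]
    exact fun x hx => (ih x hx).trans (hX d (List.mem_cons_self ..)).symm

end Walks

lemma dsrc_mem_iff_dtgt_mem {X : Set V} (hX : ∀ e, G.src e ∈ X ↔ G.tgt e ∈ X) (d : Dart E) :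
    G.dsrc d ∈ X ↔ G.dtgt d ∈ X := by
  rcases d with ⟨e, _ | _⟩
  exacts [(hX e).symm, hX e]

lemma not_conn_iff :
    ¬ G.Conn ↔ ∃ X : Set V, X.Nonempty ∧ Xᶜ.Nonempty ∧ ∀ e, (G.src e ∈ X ↔ G.tgt e ∈ X) := by
  constructor
  · intro h
    simp only [Conn, not_forall, not_exists] at h
    obtain ⟨u, v, huv⟩ := h
    refine ⟨{a | ∃ w, G.IsWalkFrom w u a}, ⟨u, [], isWalkFrom_nil u⟩, ⟨v, fun ⟨w, hw⟩ => huv w hw⟩,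
      fun e => ⟨fun ⟨w, hw⟩ => ⟨_, IsWalkFrom.append_dart (d := (e, true)) hw⟩,
        fun ⟨w, hw⟩ => ⟨_, IsWalkFrom.append_dart (d := (e, false)) hw⟩⟩⟩
  · rintro ⟨X, ⟨u, hu⟩, ⟨v, hv⟩, hX⟩ hconn
    obtain ⟨w, hw⟩ := hconn u v
    exact hv (((hw.mem_iff fun d _ => G.dsrc_mem_iff_dtgt_mem hX d) v (by simp)).2 hu)

end Multigraph

lemma isEdgeCut_iff {V E : Type} {G : Multigraph V E} {S : Set E} :
    IsEdgeCut G S ↔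
      ∃ X : Set V, X.Nonempty ∧ Xᶜ.Nonempty ∧ ∀ e ∉ S, (G.src e ∈ X ↔ G.tgt e ∈ X) := by
  rw [IsEdgeCut, not_conn_iff]
  simp [restrict]

namespace Multigraph

variable {V E : Type} (G : Multigraph V E)

noncomputable def incidence (v : V) (e : E) : ℕ :=
  (if G.src e = v then 1 else 0) + (if G.tgt e = v then 1 else 0)

noncomputable def incMatrix : Matrix V E (ZMod 2) := fun v e => G.incidence v e

lemma incidence_fst (v : V) (d : Dart E) :
    G.incidence v d.1 = (if G.dsrc d = v then 1 else 0) + (if G.dtgt d = v then 1 else 0) := by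
  rcases d with ⟨e, _ | _⟩ <;> simp [incidence, dsrc, dtgt, add_comm]

lemma mem_edges_iff {w : List (Dart E)} {e : E} : e ∈ edges w ↔ e ∈ w.map Prod.fst := by
  simp [edges]

lemma sum_incidence_eq_count_add_count {w : List (Dart E)} (hw : (w.map Prod.fst).Nodup) (v : V) :
    ∑ e ∈ (w.map Prod.fst).toFinset, G.incidence v e =
      (w.map G.dsrc).count v + (w.map G.dtgt).count v := by
  rw [List.sum_toFinset _ hw, List.map_map]
  simp only [Function.comp_def, incidence_fst, List.sum_map_add, List.sum_map_ite_eq_count]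

variable {G}

lemma incidence_ne_zero_iff {v : V} {e : E} : G.incidence v e ≠ 0 ↔ G.src e = v ∨ G.tgt e = v := by
  by_cases h : G.src e = v <;> simp [incidence, h]

lemma incidence_fst_ne_zero_iff {v : V} {d : Dart E} :
    G.incidence v d.1 ≠ 0 ↔ G.dsrc d = v ∨ G.dtgt d = v := by
  by_cases h : G.dsrc d = v <;> simp [incidence_fst, h]

lemma IsCycle.sum_incidence {w : List (Dart E)} (hw : G.IsCycle w) (v : V) :
    ∑ e ∈ (w.map Prod.fst).toFinset, G.incidence v e = if v ∈ w.map G.dsrc then 2 else 0 := by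
  obtain ⟨d, hd⟩ := Option.ne_none_iff_exists'.1 (mt List.head?_eq_none_iff.1 hw.1.1)
  have hcount := congrArg (List.count v) (hw.1.isWalkFrom hd).cons_map_dtgt
  simp only [List.count_cons, List.count_append, List.count_nil, zero_add,
    Nat.add_right_cancel_iff] at hcount
  rw [G.sum_incidence_eq_count_add_count hw.2.1, hcount]
  split_ifs with hv
  · simp [List.count_eq_one_of_mem hw.2.2 hv]
  · simp [List.count_eq_zero.2 hv]

lemma IsWalkFrom.sum_incidence {w : List (Dart E)} {u v : V} (h : G.IsWalkFrom w u v)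
    (hw : (w.map Prod.fst).Nodup) (hu : u ∈ w.map G.dsrc) (hv : v ∉ w.map G.dsrc) :
    ∑ e ∈ (w.map Prod.fst).toFinset, G.incidence v e = 1 := by
  have hcount := congrArg (List.count v) h.cons_map_dtgt
  have huv : u ≠ v := fun huv => hv (huv ▸ hu)
  simp only [List.count_cons, List.count_append, List.count_eq_zero.2 hv,
    beq_iff_eq, huv, if_false] at hcount
  rw [G.sum_incidence_eq_count_add_count hw, List.count_eq_zero.2 hv]
  simpa using hcount

/-- At each of its vertices the smaller cycle already takes both edges of the bigger one, and the
bigger cycle is connected. -/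
lemma IsCycle.edges_eq_of_subset {w w' : List (Dart E)} (hw : G.IsCycle w) (hw' : G.IsCycle w')
    (hsub : edges w' ⊆ edges w) : edges w' = edges w := by
  set X : Set V := {x | x ∈ w'.map G.dsrc}
  have hfull : ∀ x ∈ X, ∀ e ∈ w.map Prod.fst, G.incidence x e ≠ 0 → e ∈ w'.map Prod.fst := by
    intro x hx e he hxe
    by_contra he'
    have hlt := Finset.sum_lt_sum_of_subset (f := G.incidence x)
      (fun e he => by simpa [mem_edges_iff] using hsub (mem_edges_iff.2 (List.mem_toFinset.1 he)))
      (List.mem_toFinset.2 he) (mt List.mem_toFinset.1 he') (Nat.pos_of_ne_zero hxe)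
      (fun _ _ _ => Nat.zero_le _)
    rw [hw'.sum_incidence, hw.sum_incidence, if_pos (show x ∈ w'.map G.dsrc from hx)] at hlt
    split_ifs at hlt <;> omega
  have hends : ∀ x, ∀ e ∈ w'.map Prod.fst, G.incidence x e ≠ 0 → x ∈ X := by
    intro x e he hxe
    by_contra hx
    have hzero := hw'.sum_incidence x
    rw [if_neg (show x ∉ w'.map G.dsrc from hx), Finset.sum_eq_zero_iff] at hzero
    exact hxe (hzero e (List.mem_toFinset.2 he))
  have hstep : ∀ d ∈ w, G.dsrc d ∈ X ↔ G.dtgt d ∈ X := by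
    intro d hd
    have hdw := List.mem_map_of_mem (f := Prod.fst) hd
    constructor
    · exact fun hx => hends _ d.1 (hfull _ hx _ hdw (incidence_fst_ne_zero_iff.2 (.inl rfl)))
        (incidence_fst_ne_zero_iff.2 (.inr rfl))
    · exact fun hx => hends _ d.1 (hfull _ hx _ hdw (incidence_fst_ne_zero_iff.2 (.inr rfl)))
        (incidence_fst_ne_zero_iff.2 (.inl rfl))
  obtain ⟨d₀, hd₀⟩ := Option.ne_none_iff_exists'.1 (mt List.head?_eq_none_iff.1 hw.1.1)
  have hall := (hw.1.isWalkFrom hd₀).mem_iff hstep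
  obtain ⟨d₁, hd₁, hd₁X⟩ : ∃ d ∈ w, G.dsrc d ∈ X := by
    obtain ⟨d', hd'⟩ := List.exists_mem_of_ne_nil w' hw'.1.1
    obtain ⟨d, hd, hdd'⟩ := List.mem_map.1 (mem_edges_iff.1 (hsub (mem_edges_iff.2
      (List.mem_map_of_mem hd'))))
    have hx : G.dsrc d' ∈ X := List.mem_map_of_mem hd'
    rcases incidence_fst_ne_zero_iff.1 (hdd' ▸ incidence_fst_ne_zero_iff.2 (.inl rfl) :
      G.incidence (G.dsrc d') d.1 ≠ 0) with h | h
    · exact ⟨d, hd, h ▸ hx⟩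
    · exact ⟨d, hd, (hstep d hd).2 (h ▸ hx)⟩
  have hd₀X := (hall _ (List.mem_append_left _ (List.mem_map_of_mem hd₁))).1 hd₁X
  refine hsub.antisymm fun e he => ?_
  obtain ⟨d, hd, rfl⟩ := List.mem_map.1 (mem_edges_iff.1 he)
  have hdX := (hall _ (List.mem_append_left _ (List.mem_map_of_mem hd))).2 hd₀X
  exact mem_edges_iff.2 (hfull _ hdX _ (List.mem_map_of_mem hd)
    (incidence_fst_ne_zero_iff.2 (.inl rfl)))

lemma isAntichain_isCycleSet : IsAntichain (· ⊆ ·) {S | IsCycleSet G S} := by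
  rintro _ ⟨w, hw, rfl⟩ _ ⟨w', hw', rfl⟩ hne hsub
  exact hne (hw'.edges_eq_of_subset hw hsub)

open Matrix

lemma exists_dsrc_eq_of_incidence_ne_zero {v : V} {e : E} (h : G.incidence v e ≠ 0) :
    ∃ d : Dart E, d.1 = e ∧ G.dsrc d = v := by
  rcases incidence_ne_zero_iff.1 h with h | h
  exacts [⟨(e, true), rfl, h⟩, ⟨(e, false), rfl, h⟩]

lemma support_chain2 (w : List (Dart E)) : Function.support (chain2 w) = edges w := by
  ext e
  by_cases h : e ∈ edges w <;> simp [chain2, h]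

lemma IsCycle.chain2_ne_zero {w : List (Dart E)} (hw : G.IsCycle w) : chain2 w ≠ 0 := by
  obtain ⟨d, hd⟩ := List.exists_mem_of_ne_nil w hw.1.1
  exact Function.support_nonempty_iff.1 (support_chain2 w ▸ ⟨d.1, d.2, hd⟩)

variable [Fintype E]

lemma incMatrix_mulVec_apply (x : E → ZMod 2) (v : V) :
    (G.incMatrix *ᵥ x) v =
      ((∑ e ∈ Finset.univ.filter (x · ≠ 0), G.incidence v e : ℕ) : ZMod 2) := by
  rw [Matrix.mulVec, dotProduct, Finset.sum_filter]
  push_cast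
  refine Finset.sum_congr rfl fun e _ => ?_
  by_cases h : x e = 0
  · simp [h]
  · simp [ZMod.eq_one_of_ne_zero h, incMatrix]

lemma IsCycle.incMatrix_mulVec_chain2 {w : List (Dart E)} (hw : G.IsCycle w) :
    G.incMatrix *ᵥ chain2 w = 0 := by
  have hsupp : Finset.univ.filter (chain2 w · ≠ 0) = (w.map Prod.fst).toFinset := by
    ext e
    simpa [mem_edges_iff] using Set.ext_iff.1 (support_chain2 w) e
  funext v
  rw [incMatrix_mulVec_apply, hsupp, hw.sum_incidence, Pi.zero_apply]
  split_ifs <;> decide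

lemma cycleSpace_le_ker_incMatrix : cycleSpace G ≤ LinearMap.ker G.incMatrix.mulVecLin :=
  Submodule.span_le.2 fun _ ⟨_, hw, hx⟩ => hx ▸ hw.incMatrix_mulVec_chain2

lemma exists_incidence_ne_zero_of_odd {x : E → ZMod 2} (hx : G.incMatrix *ᵥ x = 0)
    {s : Finset E} (hs : ∀ e ∈ s, x e ≠ 0) {v : V} (hodd : Odd (∑ e ∈ s, G.incidence v e)) :
    ∃ e ∉ s, x e ≠ 0 ∧ G.incidence v e ≠ 0 := by
  have heven := ZMod.natCast_eq_zero_iff_even.1 ((incMatrix_mulVec_apply x v).symm.trans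
    (congrFun hx v))
  rw [← Finset.sum_sdiff (fun e he => by simpa using hs e he : s ⊆ _)] at heven
  have hrest : ∑ e ∈ Finset.univ.filter (x · ≠ 0) \ s, G.incidence v e ≠ 0 := fun h0 => by
    rw [h0, zero_add] at heven
    exact Nat.not_even_iff_odd.2 hodd heven
  obtain ⟨e, he, hev⟩ := Finset.exists_ne_zero_of_sum_ne_zero hrest
  simp only [Finset.mem_sdiff, Finset.mem_filter, Finset.mem_univ, true_and] at he
  exact ⟨e, he.2, he.1, hev⟩

/-- Grow a path inside the support of `x` until it returns to one of its vertices; parity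
guarantees that it can always be continued. -/
theorem exists_isCycle_of_isWalkFrom [Fintype V] {x : E → ZMod 2} (hx : G.incMatrix *ᵥ x = 0)
    {p : List (Dart E)} {u v : V} (hp : G.IsWalkFrom p u v) (hu : u ∈ p.map G.dsrc)
    (hpe : (p.map Prod.fst).Nodup) (hpv : (p.map G.dsrc).Nodup) (hpx : ∀ d ∈ p, x d.1 ≠ 0) :
    ∃ w, G.IsCycle w ∧ edges w ⊆ Function.support x := by
  by_cases hv : v ∈ p.map G.dsrc
  · obtain ⟨d, hd, rfl⟩ := List.mem_map.1 hv
    obtain ⟨s, t, rfl⟩ := List.mem_iff_append.1 hd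
    obtain ⟨a, ha⟩ := hp.of_append
    obtain ⟨rfl, -⟩ := ha.of_cons
    refine ⟨d :: t, ⟨ha.isClosedWalk (List.cons_ne_nil _ _), ?_, ?_⟩, ?_⟩
    · exact hpe.sublist ((List.sublist_append_right _ _).map _)
    · exact hpv.sublist ((List.sublist_append_right _ _).map _)
    · rintro e ⟨b, hb⟩
      exact hpx _ (List.mem_append_right _ hb)
  · obtain ⟨e, he, hxe, hve⟩ := exists_incidence_ne_zero_of_odd hx
      (s := (p.map Prod.fst).toFinset) (fun e he => by
        obtain ⟨d, hd, rfl⟩ := List.mem_map.1 (List.mem_toFinset.1 he)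
        exact hpx d hd)
      (by rw [hp.sum_incidence hpe hu hv]; exact odd_one)
    obtain ⟨d, rfl, hdv⟩ := exists_dsrc_eq_of_incidence_ne_zero hve
    refine exists_isCycle_of_isWalkFrom hx (hdv ▸ hp).append_dart
      (by rw [List.map_append]; exact List.mem_append_left _ hu) ?_ ?_ ?_
    · rw [List.map_append, List.map_singleton, List.nodup_append_comm]
      exact List.nodup_cons.2 ⟨mt List.mem_toFinset.2 he, hpe⟩
    · rw [List.map_append, List.map_singleton, List.nodup_append_comm, hdv]
      exact List.nodup_cons.2 ⟨hv, hpv⟩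
    · intro d' hd'
      rcases List.mem_append.1 hd' with hd' | hd'
      exacts [hpx d' hd', List.mem_singleton.1 hd' ▸ hxe]
termination_by Fintype.card V - p.length
decreasing_by
  have := (List.nodup_cons.2 ⟨hv, hpv⟩).length_le_card
  simp only [List.length_cons, List.length_map] at this
  simp only [List.length_append, List.length_singleton]
  omega

theorem exists_isCycle_subset_support [Fintype V] {x : E → ZMod 2} (hx : G.incMatrix *ᵥ x = 0)
    (hx0 : x ≠ 0) : ∃ w, G.IsCycle w ∧ edges w ⊆ Function.support x := by
  obtain ⟨e, he⟩ := Function.ne_iff.1 hx0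
  exact exists_isCycle_of_isWalkFrom hx ((isWalkFrom_nil (G.src e)).append_dart (d := (e, true)))
    (by simp [dsrc]) (by simp) (by simp) (by simpa using he)

end Multigraph

section DualGraph

open Finset

variable {ι E : Type} [Fintype ι]

/-- The dual of a family of `𝔽₂`-chains on `E`: a vertex for each chain and an outer vertex `none`;
the edge `e` joins the (at most two) chains containing it, padded with `none`. -/
noncomputable def dualGraph (z : ι → E → ZMod 2) : Multigraph (Option ι) E where
  src e := (univ.filter (z · e ≠ 0)).toList[0]?
  tgt e := (univ.filter (z · e ≠ 0)).toList[1]?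

variable {z : ι → E → ZMod 2}

lemma dualGraph_src_mem_iff_tgt_mem (hz : ∀ e, #(univ.filter (z · e ≠ 0)) ≤ 2) (T : Finset ι)
    (e : E) :
    ((dualGraph z).src e ∈ some '' ↑T ↔ (dualGraph z).tgt e ∈ some '' ↑T) ↔
      (∑ i ∈ T, z i) e = 0 := by
  simp only [dualGraph]
  rw [getElem?_mem_image_some_iff_sum_eq_zero _ _ (by simpa using hz e),
    sum_map_toList, Finset.sum_apply]
  simp only [mem_coe, sum_boole]
  have hT : ∑ i ∈ T, z i e = ∑ i ∈ T, if z i e ≠ 0 then 1 else 0 := by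
    refine sum_congr rfl fun i _ => ?_
    by_cases h : z i e = 0
    · simp [h]
    · simp [ZMod.eq_one_of_ne_zero h]
  rw [hT, sum_boole]
  congr! 3
  ext i
  simp [and_comm]

lemma isEdgeCut_dualGraph_support (hz : ∀ e, #(univ.filter (z · e ≠ 0)) ≤ 2) {T : Finset ι}
    (hT : T.Nonempty) :
    IsEdgeCut (dualGraph z) (Function.support (∑ i ∈ T, z i)) :=
  isEdgeCut_iff.2 ⟨some '' ↑T, (coe_nonempty.2 hT).image _, ⟨none, by simp⟩,
    fun e he => (dualGraph_src_mem_iff_tgt_mem hz T e).2 (Function.notMem_support.1 he)⟩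

lemma exists_support_subset_of_isEdgeCut_dualGraph (hz : ∀ e, #(univ.filter (z · e ≠ 0)) ≤ 2)
    {S : Set E} (hS : IsEdgeCut (dualGraph z) S) :
    ∃ T : Finset ι, T.Nonempty ∧ Function.support (∑ i ∈ T, z i) ⊆ S := by
  obtain ⟨X, hX, hXc, hcross⟩ := isEdgeCut_iff.1 hS
  wlog hnone : none ∉ X generalizing X
  · exact this Xᶜ hXc (by rwa [compl_compl]) (fun e he => not_iff_not.2 (hcross e he))
      (by simpa using hnone)
  set T := univ.filter (fun i => some i ∈ X)
  have hXT : X = some '' ↑T := by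
    ext (_ | i) <;> simp [T, hnone]
  refine ⟨T, ?_, fun e he => by_contra fun heS =>
    he ((dualGraph_src_mem_iff_tgt_mem hz T e).1 (hXT ▸ hcross e heS))⟩
  obtain ⟨_ | i, hi⟩ := hX
  exacts [absurd hi hnone, ⟨i, by simpa [T] using hi⟩]

end DualGraph

open Finset in
theorem isCycleSet_iff_isMinimalCut_dualGraph {V E ι : Type} [Fintype V] [Fintype E] [Fintype ι]
    {G : Multigraph V E} {z : ι → E → ZMod 2} (hli : LinearIndependent (ZMod 2) z)
    (hspan : Submodule.span (ZMod 2) (Set.range z) = cycleSpace G)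
    (hz : ∀ e, #(univ.filter (z · e ≠ 0)) ≤ 2) (S : Set E) :
    IsCycleSet G S ↔ IsMinimalCut (dualGraph z) S := by
  rw [IsMinimalCut, ← Set.minimal_iff_forall_ssubset]
  refine isAntichain_isCycleSet.iff_minimal_of_forall_exists_subset ?_ ?_ S
  · rintro _ ⟨w, hw, rfl⟩
    have hmem : chain2 w ∈ Submodule.span (ZMod 2) (Set.range z) :=
      hspan ▸ Submodule.subset_span ⟨w, hw, rfl⟩
    obtain ⟨T, hT⟩ := ZMod.mem_span_range_iff_exists_finset_sum.1 hmem
    rw [← support_chain2, ← hT]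
    exact isEdgeCut_dualGraph_support hz (nonempty_of_sum_ne_zero (hT ▸ hw.chain2_ne_zero))
  · intro S hS
    obtain ⟨T, hTne, hTS⟩ := exists_support_subset_of_isEdgeCut_dualGraph hz hS
    have hmem : ∑ i ∈ T, z i ∈ cycleSpace G :=
      hspan ▸ Submodule.sum_mem _ fun i _ => Submodule.subset_span ⟨i, rfl⟩
    obtain ⟨w, hw, hwT⟩ := exists_isCycle_subset_support (cycleSpace_le_ker_incMatrix hmem)
      (hli.sum_ne_zero hTne)
    exact ⟨edges w, hwT.trans hTS, w, hw, rfl⟩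

theorem IsPlanarMacLane.exists_isAbstractDual {V E : Type} [Fintype V] [Fintype E]
    {G : Multigraph V E} (hG : IsPlanarMacLane G) :
    ∃ (W : Type) (D : Multigraph W E), IsAbstractDual G D := by
  obtain ⟨n, b, c, hbc, hsimple⟩ := hG
  have hz : (fun i => chain2 (c i)) = (cycleSpace G).subtype ∘ b :=
    funext fun i => (hbc i).2.symm
  refine ⟨_, dualGraph fun i => chain2 (c i), Equiv.refl E, fun S => ?_⟩
  rw [Equiv.coe_refl, Set.image_id]
  refine isCycleSet_iff_isMinimalCut_dualGraph ?_ ?_ (fun e => ?_) S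
  · rw [hz]
    exact b.linearIndependent.map' _ (Submodule.ker_subtype _)
  · rw [hz, Set.range_comp, Submodule.span_image, b.span_eq, Submodule.map_subtype_top]
  · simpa [chain2] using hsimple e

section TwoIsomorphic

variable {V E V' E' W F : Type} {G : Multigraph V E} {H : Multigraph V' E'} {D : Multigraph W F}

lemma TwoIsomorphic.symm (h : TwoIsomorphic G H) : TwoIsomorphic H G := by
  obtain ⟨φ, hφ⟩ := h
  exact ⟨φ.symm, fun S => by simpa using (hφ (φ.symm '' S)).symm⟩

lemma IsAbstractDual.of_twoIsomorphic (hHG : TwoIsomorphic H G) (hG : IsAbstractDual G D) :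
    IsAbstractDual H D := by
  obtain ⟨φ, hφ⟩ := hHG
  obtain ⟨ψ, hψ⟩ := hG
  exact ⟨φ.trans ψ, fun S => by rw [hφ, hψ, Equiv.coe_trans, Set.image_comp]⟩

lemma TwoIsomorphic.of_isAbstractDual (hG : IsAbstractDual G D) (hH : IsAbstractDual H D) :
    TwoIsomorphic G H := by
  obtain ⟨ψG, hψG⟩ := hG
  obtain ⟨ψH, hψH⟩ := hH
  exact ⟨ψG.trans ψH.symm, fun S => by
    rw [hψG, hψH, Equiv.coe_trans, Set.image_comp, Equiv.image_symm_image]⟩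

end TwoIsomorphic

theorem stmt6_general {V E V' E' : Type} [Fintype V] [Fintype E]
    (G : Multigraph V E) (H : Multigraph V' E')
    (hG : IsPlanarMacLane G) :
    TwoIsomorphic G H ↔
      ∀ (W F : Type) (D : Multigraph W F), IsAbstractDual G D ↔ IsAbstractDual H D := by
  refine ⟨fun h W F D => ⟨(·.of_twoIsomorphic h.symm), (·.of_twoIsomorphic h)⟩, fun h => ?_⟩
  obtain ⟨W, D, hD⟩ := hG.exists_isAbstractDual
  exact .of_isAbstractDual hD ((h W E D).1 hD)

/-- two planar graphs are 2-isomorphic iff they have the same set of abstract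
duals. -/
theorem stmt6 {V E V' E' : Type} [Fintype V] [Fintype E] [Fintype V'] [Fintype E']
    (G : Multigraph V E) (H : Multigraph V' E')
    (hG : IsPlanarMacLane G) (hH : IsPlanarMacLane H) :
    TwoIsomorphic G H ↔
      ∀ (W F : Type) (D : Multigraph W F), IsAbstractDual G D ↔ IsAbstractDual H D :=
  stmt6_general G H hG
end

section
/- For a finite sum f(t) = sum_{j=1}^k nu_j cos(mu_j t) with nu_k nonzero and 0 < mu_1 < ... < mu_k, the top frequency is recovered from the derivatives at 0: lambda = mu_k^2 is the unique positive real such that the limit of f^{(2n)}(0)/(-lambda)^n as n tends to infinity exists, is finite, and is nonzero; moreover this limit equals nu_k. -/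
/-!
Since `f^{(2n)}(0) = (-1)^n ∑ ν_j μ_j^{2n}`, the quotient `f^{(2n)}(0) / (-μ_k²)^n` equals
`∑ ν_j (μ_j² / μ_k²)^n`, which tends to `ν_k ≠ 0`. For any other `λ > 0` the quotient
`f^{(2n)}(0) / (-λ)^n` is that sequence times `(μ_k² / λ)^n`, and a sequence with nonzero limit
times `r^n` (`r ≥ 0`) has a nonzero limit only when `r = 1`.
-/

open Filter Topology

theorem iteratedDeriv_even_sum_cos_zero {ι : Type*} (s : Finset ι) (a b : ι → ℝ) (n : ℕ) :
    iteratedDeriv (2 * n) (fun t => ∑ j ∈ s, a j * Real.cos (b j * t)) 0 =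
      (-1) ^ n * ∑ j ∈ s, a j * b j ^ (2 * n) := by
  rw [iteratedDeriv_fun_sum fun j _ => by fun_prop, Finset.mul_sum]
  refine Finset.sum_congr rfl fun j _ => ?_
  rw [iteratedDeriv_const_mul_field, iteratedDeriv_comp_const_mul Real.contDiff_cos,
    Real.iteratedDeriv_even_cos]
  simp only [mul_zero, Pi.mul_apply, Pi.pow_apply, Pi.neg_apply, Pi.one_apply, Real.cos_zero]
  ring

theorem tendsto_sum_mul_pow_of_eq_one {ι : Type*} [Fintype ι] (c q : ι → ℝ) (i : ι)
    (hqi : q i = 1) (hq : ∀ j ≠ i, |q j| < 1) :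
    Tendsto (fun n : ℕ => ∑ j, c j * q j ^ n) atTop (𝓝 (c i)) := by
  classical
  have hterm : ∀ j,
      Tendsto (fun n : ℕ => c j * q j ^ n) atTop (𝓝 (if j = i then c i else 0)) := by
    intro j
    split_ifs with hji
    · subst hji; simp [hqi]
    · simpa using (tendsto_pow_atTop_nhds_zero_of_abs_lt_one (hq j hji)).const_mul (c j)
  simpa using tendsto_finsetSum Finset.univ fun j _ => hterm j

theorem exists_ne_zero_tendsto_mul_pow_iff {s : ℕ → ℝ} {a r : ℝ} (hs : Tendsto s atTop (𝓝 a))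
    (ha : a ≠ 0) (hr : 0 ≤ r) :
    (∃ c ≠ 0, Tendsto (fun n => s n * r ^ n) atTop (𝓝 c)) ↔ r = 1 := by
  refine ⟨fun ⟨c, hc, hsc⟩ => ?_, fun hr1 => ⟨a, ha, by simpa [hr1] using hs⟩⟩
  rcases lt_trichotomy r 1 with hlt | heq | hgt
  · have h0 := hs.mul (tendsto_pow_atTop_nhds_zero_of_lt_one hr hlt)
    exact absurd (tendsto_nhds_unique hsc h0) (by simpa using hc)
  · exact heq
  · have hr0 : r ≠ 0 := (zero_lt_one.trans hgt).ne'
    have h0 := hsc.mul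
      (tendsto_pow_atTop_nhds_zero_of_lt_one (inv_nonneg.2 hr) (inv_lt_one_of_one_lt₀ hgt))
    have : (fun n => s n * r ^ n * r⁻¹ ^ n) = s := by
      funext n; rw [mul_assoc, ← mul_pow, mul_inv_cancel₀ hr0, one_pow, mul_one]
    rw [this, mul_zero] at h0
    exact absurd (tendsto_nhds_unique hs h0) ha

/-- for `f(t) = ∑ ν_j cos(μ_j t)` with `ν_k ≠ 0` and `0 < μ_1 < ... < μ_k`,
`λ = μ_k²` is the unique positive real such that `f^{(2n)}(0)/(-λ)^n` converges to a
finite nonzero limit, and for `λ = μ_k²` the limit equals `ν_k`. -/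
theorem stmt8 (k : ℕ) (hk : 0 < k) (ν μ : Fin k → ℝ)
    (hν : ν ⟨k - 1, Nat.sub_lt hk one_pos⟩ ≠ 0)
    (hμ : StrictMono μ) (hpos : ∀ j, 0 < μ j)
    (f : ℝ → ℝ) (hf : f = fun t => ∑ j, ν j * Real.cos (μ j * t)) :
    (∀ lam : ℝ, 0 < lam →
      ((∃ c : ℝ, c ≠ 0 ∧
          Tendsto (fun n : ℕ => iteratedDeriv (2 * n) f 0 / (-lam) ^ n) atTop (𝓝 c))
        ↔ lam = (μ ⟨k - 1, Nat.sub_lt hk one_pos⟩) ^ 2)) ∧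
    Tendsto
      (fun n : ℕ => iteratedDeriv (2 * n) f 0 / (-(μ ⟨k - 1, Nat.sub_lt hk one_pos⟩) ^ 2) ^ n)
      atTop (𝓝 (ν ⟨k - 1, Nat.sub_lt hk one_pos⟩)) := by
  set last : Fin k := ⟨k - 1, Nat.sub_lt hk one_pos⟩
  have hsq : 0 < μ last ^ 2 := pow_pos (hpos last) 2
  have hratio : ∀ lam ≠ 0, ∀ n : ℕ,
      iteratedDeriv (2 * n) f 0 / (-lam) ^ n = ∑ j, ν j * (μ j ^ 2 / lam) ^ n := by
    intro lam hlam n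
    rw [hf, iteratedDeriv_even_sum_cos_zero, neg_pow lam, Finset.mul_sum, Finset.sum_div]
    refine Finset.sum_congr rfl fun j _ => ?_
    rw [div_pow, ← pow_mul]
    field_simp
  have hlim : Tendsto (fun n : ℕ => iteratedDeriv (2 * n) f 0 / (-μ last ^ 2) ^ n) atTop
      (𝓝 (ν last)) := by
    simp_rw [hratio _ hsq.ne']
    refine tendsto_sum_mul_pow_of_eq_one ν _ last (div_self hsq.ne') fun j hj => ?_
    have hlt : μ j < μ last := hμ (lt_of_le_of_ne (Fin.mk_le_mk.2 (by omega)) hj)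
    rw [abs_of_nonneg (by positivity), div_lt_one hsq]
    exact pow_lt_pow_left₀ hlt (hpos j).le two_ne_zero
  refine ⟨fun lam hlam => ?_, hlim⟩
  have hrescale : ∀ n : ℕ, iteratedDeriv (2 * n) f 0 / (-lam) ^ n =
      iteratedDeriv (2 * n) f 0 / (-μ last ^ 2) ^ n * (μ last ^ 2 / lam) ^ n := by
    intro n
    rw [neg_pow (μ last ^ 2), neg_pow lam, div_pow]
    field_simp
  simp_rw [hrescale, exists_ne_zero_tendsto_mul_pow_iff hlim hν (div_pos hsq hlam).le,
    div_eq_one_iff_eq hlam.ne', eq_comm]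
end

section
/- In a metric graph, if a closed walk of minimal length in its homology class is not a cycle (i.e., it repeats a vertex), then its homology class mu can be written as mu = kappa + kappa' or mu = kappa - kappa' with kappa, kappa' nonzero homology classes whose minimal representative lengths satisfy l(kappa) + l(kappa') <= l(mu). -/
open scoped Classical

open Multigraph

/-! Cut a closed walk at a repeated vertex into two closed walks; their chains and lengths add
up to those of the walk. If the walk is length-minimal in its class, neither piece has chain `0`,
since the other piece would then be a strictly shorter representative (edge lengths are positive).
Each piece is at least as long as the minimal representative of its own class. -/

theorem List.exists_eq_append_cons_append_cons_of_not_nodup_map {α β : Type*} {f : α → β}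
    {l : List α} (h : ¬ (l.map f).Nodup) :
    ∃ p a q b r, l = p ++ a :: q ++ b :: r ∧ f a = f b := by
  rw [List.Nodup, List.pairwise_map, List.pairwise_iff_forall_sublist] at h
  push Not at h
  obtain ⟨a, b, hab, hfab⟩ := h
  obtain ⟨r₁, r₂, rfl, ha, hb⟩ := List.cons_sublist_iff.mp hab
  obtain ⟨s, t, rfl⟩ := List.append_of_mem ha
  obtain ⟨s', t', rfl⟩ := List.append_of_mem (List.singleton_sublist.mp hb)
  exact ⟨s, a, t ++ s', b, t', by simp, hfab⟩

namespace Multigraph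

variable {V E : Type} {G : Multigraph V E}

theorem chain_append (x y : List (Dart E)) : chain (x ++ y) = chain x + chain y := by
  simp [chain]

theorem chain_perm {x y : List (Dart E)} (h : x.Perm y) : chain x = chain y :=
  (h.map _).sum_eq

theorem walkLength_append (l : E → ℝ) (x y : List (Dart E)) :
    walkLength l (x ++ y) = walkLength l x + walkLength l y := by
  simp [walkLength]

theorem walkLength_perm (l : E → ℝ) {x y : List (Dart E)} (h : x.Perm y) :
    walkLength l x = walkLength l y :=
  (h.map _).sum_eq

theorem walkLength_nonneg {l : E → ℝ} (hl : ∀ e, 0 ≤ l e) (w : List (Dart E)) :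
    0 ≤ walkLength l w :=
  List.sum_nonneg (by simpa using fun d _ => hl d)

theorem walkLength_pos {l : E → ℝ} (hl : ∀ e, 0 < l e) {w : List (Dart E)} (hw : w ≠ []) :
    0 < walkLength l w := by
  obtain ⟨d, t, rfl⟩ := List.exists_cons_of_ne_nil hw
  have := walkLength_nonneg (fun e => (hl e).le) t
  simp only [walkLength, List.map_cons, List.sum_cons] at this ⊢
  linarith [hl d.1]

theorem isClosedWalk_iff {w : List (Dart E)} (hw : w ≠ []) :
    G.IsClosedWalk w ↔ List.IsChain (fun d d' => G.dtgt d = G.dsrc d') w ∧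
      G.dtgt (w.getLast hw) = G.dsrc (w.head hw) := by
  simp only [IsClosedWalk, List.Chain', List.getLast?_eq_some_getLast hw,
    List.head?_eq_some_head hw, Option.mem_def, Option.some.injEq, forall_eq', ne_eq, hw,
    not_false_eq_true, true_and]

theorem isClosedWalk_append_iff {x y : List (Dart E)} (hx : x ≠ []) (hy : y ≠ []) :
    G.IsClosedWalk (x ++ y) ↔
      List.IsChain (fun d d' => G.dtgt d = G.dsrc d') x ∧
        List.IsChain (fun d d' => G.dtgt d = G.dsrc d') y ∧
        G.dtgt (x.getLast hx) = G.dsrc (y.head hy) ∧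
        G.dtgt (y.getLast hy) = G.dsrc (x.head hx) := by
  rw [isClosedWalk_iff (by simp [hx]), List.isChain_append, List.getLast_append_of_ne_nil _ hy,
    List.head_append_of_ne_nil hx, List.getLast?_eq_some_getLast hx, List.head?_eq_some_head hy]
  simp only [Option.mem_def, Option.some.injEq, forall_eq', and_assoc]

theorem IsClosedWalk.append_comm {x y : List (Dart E)} (h : G.IsClosedWalk (x ++ y)) :
    G.IsClosedWalk (y ++ x) := by
  rcases eq_or_ne x [] with rfl | hx
  · simpa using h
  rcases eq_or_ne y [] with rfl | hy
  · simpa using h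
  obtain ⟨hcx, hcy, hxy, hyx⟩ := (isClosedWalk_append_iff hx hy).mp h
  exact (isClosedWalk_append_iff hy hx).mpr ⟨hcy, hcx, hyx, hxy⟩

theorem IsClosedWalk.left_of_append {x y : List (Dart E)} (h : G.IsClosedWalk (x ++ y))
    (hx : x ≠ []) (hy : y ≠ []) (hsrc : G.dsrc (x.head hx) = G.dsrc (y.head hy)) :
    G.IsClosedWalk x := by
  obtain ⟨hcx, -, hxy, -⟩ := (isClosedWalk_append_iff hx hy).mp h
  exact (isClosedWalk_iff hx).mpr ⟨hcx, hxy.trans hsrc.symm⟩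

theorem IsClosedWalk.right_of_append {x y : List (Dart E)} (h : G.IsClosedWalk (x ++ y))
    (hx : x ≠ []) (hy : y ≠ []) (hsrc : G.dsrc (x.head hx) = G.dsrc (y.head hy)) :
    G.IsClosedWalk y :=
  h.append_comm.left_of_append hy hx hsrc.symm

theorem IsClosedWalk.exists_append_perm_of_not_nodup {w : List (Dart E)}
    (hw : G.IsClosedWalk w) (hnd : ¬ (w.map G.dsrc).Nodup) :
    ∃ b c, G.IsClosedWalk b ∧ G.IsClosedWalk c ∧ (b ++ c).Perm w := by
  obtain ⟨p, d, q, d', r, rfl, hsrc⟩ :=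
    List.exists_eq_append_cons_append_cons_of_not_nodup_map hnd
  have hrot : G.IsClosedWalk ((d :: q) ++ (d' :: r ++ p)) := by
    simpa using (show G.IsClosedWalk (p ++ (d :: q ++ d' :: r)) by simpa using hw).append_comm
  refine ⟨d :: q, d' :: r ++ p, hrot.left_of_append (by simp) (by simp) hsrc,
    hrot.right_of_append (by simp) (by simp) hsrc, ?_⟩
  simpa using (List.perm_append_comm (l₁ := p) (l₂ := d :: q ++ d' :: r)).symm

theorem minLen_le {l : E → ℝ} (hl : ∀ e, 0 ≤ l e) {w : List (Dart E)} (hw : G.IsClosedWalk w) :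
    G.minLen l (chain w) ≤ walkLength l w :=
  csInf_le ⟨0, by rintro _ ⟨w', -, -, rfl⟩; exact walkLength_nonneg hl w'⟩ ⟨w, hw, rfl, rfl⟩

theorem minLen_eq_walkLength {l : E → ℝ} {w : List (Dart E)} (hw : G.IsClosedWalk w)
    (hmin : ∀ w', G.IsClosedWalk w' → chain w' = chain w → walkLength l w ≤ walkLength l w') :
    G.minLen l (chain w) = walkLength l w :=
  IsLeast.csInf_eq ⟨⟨w, hw, rfl, rfl⟩, by rintro _ ⟨w', hw', hc, rfl⟩; exact hmin w' hw' hc⟩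

end Multigraph

theorem stmt14_general {V E : Type} (G : Multigraph V E)
    (l : E → ℝ) (hl : ∀ e, 0 < l e)
    (μ : E → ℤ)
    (w : List (Dart E)) (hw : G.IsClosedWalk w) (hwμ : Multigraph.chain w = μ)
    (hmin : ∀ w', G.IsClosedWalk w' → Multigraph.chain w' = μ →
      Multigraph.walkLength l w ≤ Multigraph.walkLength l w')
    (hnc : ¬ (w.map G.dsrc).Nodup) :
    ∃ κ κ' : E → ℤ, κ ≠ 0 ∧ κ' ≠ 0 ∧
      (∃ w1, G.IsClosedWalk w1 ∧ Multigraph.chain w1 = κ) ∧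
      (∃ w2, G.IsClosedWalk w2 ∧ Multigraph.chain w2 = κ') ∧
      (μ = κ + κ' ∨ μ = κ - κ') ∧
      G.minLen l κ + G.minLen l κ' ≤ G.minLen l μ := by
  subst hwμ
  obtain ⟨b, c, hb, hc, hperm⟩ := hw.exists_append_perm_of_not_nodup hnc
  have hchain : chain w = chain b + chain c := by rw [← chain_append, chain_perm hperm]
  have hlen : walkLength l w = walkLength l b + walkLength l c := by
    rw [← walkLength_append, walkLength_perm l hperm]
  have hb_pos := walkLength_pos hl hb.1
  have hc_pos := walkLength_pos hl hc.1
  have hb_ne : chain b ≠ 0 := fun h0 => by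
    linarith [hmin c hc (by rw [hchain, h0, zero_add])]
  have hc_ne : chain c ≠ 0 := fun h0 => by
    linarith [hmin b hb (by rw [hchain, h0, add_zero])]
  refine ⟨chain b, chain c, hb_ne, hc_ne, ⟨b, hb, rfl⟩, ⟨c, hc, rfl⟩, Or.inl hchain, ?_⟩
  have hl₀ : ∀ e, 0 ≤ l e := fun e => (hl e).le
  rw [minLen_eq_walkLength hw hmin]
  linarith [minLen_le hl₀ hb, minLen_le hl₀ hc]

/-- if a minimal-length closed walk in a nonzero homology class `μ` is not a
cycle (it repeats a vertex), then `μ = κ + κ'` or `μ = κ - κ'` for nonzero homology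
classes `κ, κ'` with `l(κ) + l(κ') ≤ l(μ)`. -/
theorem stmt14 {V E : Type} [Fintype V] [Fintype E] (G : Multigraph V E)
    (l : E → ℝ) (hl : ∀ e, 0 < l e)
    (μ : E → ℤ) (hμ : μ ≠ 0)
    (w : List (Dart E)) (hw : G.IsClosedWalk w) (hwμ : Multigraph.chain w = μ)
    (hmin : ∀ w', G.IsClosedWalk w' → Multigraph.chain w' = μ →
      Multigraph.walkLength l w ≤ Multigraph.walkLength l w')
    (hnc : ¬ (w.map G.dsrc).Nodup) :
    ∃ κ κ' : E → ℤ, κ ≠ 0 ∧ κ' ≠ 0 ∧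
      (∃ w1, G.IsClosedWalk w1 ∧ Multigraph.chain w1 = κ) ∧
      (∃ w2, G.IsClosedWalk w2 ∧ Multigraph.chain w2 = κ') ∧
      (μ = κ + κ' ∨ μ = κ - κ') ∧
      G.minLen l κ + G.minLen l κ' ≤ G.minLen l μ :=
  stmt14_general G l hl μ w hw hwμ hmin hnc
end
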